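/- arXiv:math/9612225 — 2 statements merged into one kernel-verified Lean document; each statement's English description precedes it below -/
import Mathlib

section
/- Let a and s be complex numbers with s² = 9 − 8a, and let k be a natural number. Assume that (a−1) + m ≠ 0, (2a − 5/2 − s/2) + m ≠ 0 and (2a − 5/2 + s/2) + m ≠ 0 for every natural number m < k. Then ∑_{j=0}^{k} [(a)_j / ((a−1)_j · j!)] · [(a)_{k−j} / ((a−1)_{k−j} · (k−j)!)] = [(2a − 3/2 − s/2)_k · (2a − 3/2 + s/2)_k] / [(2a − 5/2 − s/2)_k · (2a − 5/2 + s/2)_k] · 2^k / k!. (This is the paper's generic counterexample: the square of ₁F₁(a; a−1; x) is a ₂F₂ whose parameters involve the radical √(9−8a) and in general cannot be factored rationally.) -/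
/-!
Since `(b + 1)_j / (b)_j = (b + j) / b`, with `b = a - 1` the left side is
`(b² k!)⁻¹ ∑ C(k, j) (b + j) (b + k - j)`, and the binomial sums `∑ C(k, j) = 2^k` and
`∑ j (k - j) C(k, j) = k (k - 1) 2^(k-2)` evaluate it to `2^k ((2b + k)² - k) / (4 b² k!)`.
The same ratio turns the right side into `(α + k)(β + k) / (α β) · 2^k / k!` for the two lower
parameters `α, β`; the relation `s² = 9 - 8a` gives `α β = 4b²`, and `α + β = 4b - 1`, so
`(α + k)(β + k) = (2b + k)² - k`.
-/

/-- Rising factorial (Pochhammer symbol) `(z)_n` over the complex numbers. -/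
noncomputable def poch (z : ℂ) (n : ℕ) : ℂ := (ascPochhammer ℂ n).eval z

open Finset Nat

theorem mul_ascPochhammer_eval_add_one {S : Type*} [CommSemiring S] (z : S) (n : ℕ) :
    z * (ascPochhammer S n).eval (z + 1) = (z + n) * (ascPochhammer S n).eval z := by
  have h := ascPochhammer_succ_eval n z
  rw [ascPochhammer_succ_left, Polynomial.eval_mul, Polynomial.eval_comp] at h
  simpa [mul_comm] using h

theorem poch_ne_zero {z : ℂ} {n : ℕ} (h : ∀ m < n, z + m ≠ 0) : poch z n ≠ 0 := by
  rw [poch, Ne, ascPochhammer_eval_eq_zero_iff]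
  rintro ⟨m, hm, hmz⟩
  exact h m hm (by rw [hmz, add_neg_cancel])

theorem poch_add_one_div_poch {z : ℂ} {n : ℕ} (hz : z ≠ 0) (h : poch z n ≠ 0) :
    poch (z + 1) n / poch z n = (z + n) / z := by
  rw [div_eq_div_iff h hz, mul_comm, poch, poch, mul_ascPochhammer_eval_add_one]

theorem Nat.sum_range_mul_tsub_mul_choose (n : ℕ) :
    ∑ i ∈ range (n + 1), i * (n - i) * n.choose i = n * (n - 1) * 2 ^ (n - 2) := by
  rcases n with _ | m
  · simp
  have hreflect : ∑ i ∈ range (m + 1), (m - i) * m.choose i = m * 2 ^ (m - 1) := by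
    rw [← sum_range_mul_choose, ← sum_range_reflect]
    refine sum_congr rfl fun i hi => ?_
    have hi : i ≤ m := Nat.lt_succ_iff.mp (mem_range.mp hi)
    rw [Nat.add_sub_cancel, Nat.sub_sub_self hi, choose_symm hi]
  calc ∑ i ∈ range (m + 1 + 1), i * (m + 1 - i) * (m + 1).choose i
      = ∑ i ∈ range (m + 1), (m + 1) * ((m - i) * m.choose i) := by
        rw [sum_range_succ']
        refine (add_eq_left.mpr (by simp)).trans (sum_congr rfl fun i _ => ?_)
        rw [Nat.add_sub_add_right, mul_right_comm, mul_comm (i + 1), ← add_one_mul_choose_eq]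
        ring
    _ = (m + 1) * (m + 1 - 1) * 2 ^ (m + 1 - 2) := by
        rw [← mul_sum, hreflect, Nat.add_sub_cancel, mul_assoc]
        congr 2

theorem sum_add_mul_add_div_factorial_mul_factorial {K : Type*} [Field K] [CharZero K]
    (b : K) (k : ℕ) :
    ∑ j ∈ range (k + 1), (b + j) * (b + (k - j : ℕ)) / (j ! * (k - j)! : K)
      = ((2 * b + k) ^ 2 - k) * 2 ^ k / (4 * k !) := by
  have hk! : (k ! : K) ≠ 0 := Nat.cast_ne_zero.2 (factorial_ne_zero k)
  have hterm : ∀ j ∈ range (k + 1), (b + j) * (b + (k - j : ℕ)) / (j ! * (k - j)! : K)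
      = ((b ^ 2 + b * k) * k.choose j + (j * (k - j) * k.choose j : ℕ)) / k ! := by
    intro j hj
    have hj : j ≤ k := Nat.lt_succ_iff.mp (mem_range.mp hj)
    push_cast [Nat.cast_sub hj]
    rw [Nat.cast_choose K hj]
    have hj! : (j ! : K) ≠ 0 := Nat.cast_ne_zero.2 (factorial_ne_zero j)
    have hkj! : ((k - j)! : K) ≠ 0 := Nat.cast_ne_zero.2 (factorial_ne_zero (k - j))
    field_simp
    ring
  have hpow : ((k * (k - 1) * 2 ^ (k - 2) : ℕ) : K) * 4 = (k ^ 2 - k) * 2 ^ k := by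
    match k with
    | 0 => simp
    | 1 => simp
    | n + 2 => push_cast [Nat.add_sub_cancel]; ring
  rw [sum_congr rfl hterm, ← sum_div, sum_add_distrib, ← mul_sum, ← Nat.cast_sum,
    ← Nat.cast_sum, Nat.sum_range_choose, Nat.sum_range_mul_tsub_mul_choose]
  push_cast at hpow ⊢
  field_simp
  linear_combination hpow

theorem stmt_9 (a s : ℂ) (hs : s ^ 2 = 9 - 8 * a) (k : ℕ)
    (h1 : ∀ m : ℕ, m < k → a - 1 + (m : ℂ) ≠ 0)
    (h2 : ∀ m : ℕ, m < k → 2 * a - 5 / 2 - s / 2 + (m : ℂ) ≠ 0)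
    (h3 : ∀ m : ℕ, m < k → 2 * a - 5 / 2 + s / 2 + (m : ℂ) ≠ 0) :
    ∑ j ∈ Finset.range (k + 1),
      (poch a j / (poch (a - 1) j * (j.factorial : ℂ))) *
        (poch a (k - j) / (poch (a - 1) (k - j) * ((k - j).factorial : ℂ)))
      = (poch (2 * a - 3 / 2 - s / 2) k * poch (2 * a - 3 / 2 + s / 2) k) /
          (poch (2 * a - 5 / 2 - s / 2) k * poch (2 * a - 5 / 2 + s / 2) k)
        * 2 ^ k / (k.factorial : ℂ) := by
  rcases Nat.eq_zero_or_pos k with rfl | hk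
  · simp [poch]
  set b := a - 1 with hb_def
  set α := 2 * a - 5 / 2 - s / 2 with hα_def
  set β := 2 * a - 5 / 2 + s / 2 with hβ_def
  have hb : b ≠ 0 := by simpa using h1 0 hk
  have hα : α ≠ 0 := by simpa using h2 0 hk
  have hβ : β ≠ 0 := by simpa using h3 0 hk
  have hratio : ∀ j ≤ k, poch a j / poch b j = (b + j) / b := fun j hj => by
    simpa [hb_def] using poch_add_one_div_poch hb (poch_ne_zero fun m hm => h1 m (by omega))
  have hαβ : α * β = 4 * b ^ 2 := by linear_combination (-1 / 4 : ℂ) * hs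
  have hαβ' : α + β = 4 * b - 1 := by ring
  have hα1 : 2 * a - 3 / 2 - s / 2 = α + 1 := by ring
  have hβ1 : 2 * a - 3 / 2 + s / 2 = β + 1 := by ring
  clear_value b α β
  calc ∑ j ∈ range (k + 1),
          poch a j / (poch b j * j !) * (poch a (k - j) / (poch b (k - j) * (k - j)!))
      = (∑ j ∈ range (k + 1), (b + j) * (b + (k - j : ℕ)) / (j ! * (k - j)! : ℂ)) / b ^ 2 := by
        rw [sum_div]
        refine sum_congr rfl fun j hj => ?_
        rw [div_mul_eq_div_div, hratio j (by simpa [Nat.lt_succ_iff] using hj),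
          div_mul_eq_div_div, hratio (k - j) (Nat.sub_le k j)]
        field_simp
    _ = (α + k) * (β + k) / (α * β) * 2 ^ k / k ! := by
        rw [sum_add_mul_add_div_factorial_mul_factorial, hαβ,
          show (α + k) * (β + k) = (2 * b + k) ^ 2 - k by linear_combination hαβ + (k : ℂ) * hαβ']
        ring
    _ = _ := by
        rw [hα1, hβ1, mul_div_mul_comm (poch (α + 1) k), poch_add_one_div_poch hα (poch_ne_zero h2),
          poch_add_one_div_poch hβ (poch_ne_zero h3)]
        field_simp
end

section
/- Let a be a complex number such that (a−2) + m ≠ 0 for every natural number m. Define, for each natural number k, T(k) = ∑_{j=0}^{k} [(a)_j / ((a−2)_j · j!)] · [(a)_{k−j} / ((a−2)_{k−j} · (k−j)!)]. Then for every natural number k, −(k+1) · (k⁴ − 14k³ + 8ak³ + 67k² − 80ak² + 24a²k² − 118k + 232ak + 32a³k − 152a²k + 208a² − 96a³ + 16a⁴ − 192a + 64) · T(k+1) + 2 · (−22k + 96ak − 56ak² − 104a²k + 80a² + 31k² − 32a − 10k³ − 64a³ + 16a⁴ + 32a³k + 24a²k² + k⁴ + 8ak³) · T(k) = 0. (The quartic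 polynomial coefficients in k have no proper factorization over ℚ.) -/
noncomputable def Msum (m k : ℕ) : ℂ := ∑ j ∈ Finset.range (k+1), (k.choose j : ℂ) * (j:ℂ)^m

lemma Msum_step (m k : ℕ) :
    Msum m (k+1) = Msum m k + ∑ j ∈ Finset.range (k+1), (k.choose j : ℂ) * ((j:ℂ)+1)^m := by
  have e1 : Msum m (k+1)
      = ∑ i ∈ Finset.range (k+1),
          (((k.choose i : ℂ)) * ((i:ℂ)+1)^m + ((k.choose (i+1) : ℂ)) * ((i:ℂ)+1)^m)
        + (k.choose 0 : ℂ) * ((0:ℂ))^m := by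
    rw [Msum, Finset.sum_range_succ']
    simp only [Nat.choose_succ_succ, Nat.cast_add, Nat.cast_ofNat, Nat.cast_zero,
      Nat.choose_zero_right, Nat.cast_one, Nat.cast_succ]
    congr 1
    exact Finset.sum_congr rfl fun x _ => by rw [Nat.succ_eq_add_one]; ring
  have e2 : Msum m k
      = ∑ i ∈ Finset.range (k+1), (k.choose (i+1) : ℂ) * ((i:ℂ)+1)^m
        + (k.choose 0 : ℂ) * ((0:ℂ))^m := by
    have h : Msum m k = ∑ j ∈ Finset.range (k+2), (k.choose j : ℂ) * (j:ℂ)^m := by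
      rw [Msum, Finset.sum_range_succ (n := k+1)]
      simp
    rw [h, Finset.sum_range_succ']
    push_cast
    rfl
  rw [e1, Finset.sum_add_distrib, e2]
  ring

lemma Msum0 (k : ℕ) : Msum 0 k = 2^k := by
  induction k with
  | zero => simp [Msum]
  | succ k ih =>
    rw [Msum_step]
    have : ∑ j ∈ Finset.range (k+1), (k.choose j : ℂ) * ((j:ℂ)+1)^0 = Msum 0 k := by
      simp [Msum]
    rw [this, ih]; ring

lemma Msum1 (k : ℕ) : 2 * Msum 1 k = (k:ℂ) * 2^k := by
  induction k with
  | zero => simp [Msum]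
  | succ k ih =>
    rw [Msum_step]
    have h : ∑ j ∈ Finset.range (k+1), (k.choose j : ℂ) * ((j:ℂ)+1)^1
        = Msum 1 k + Msum 0 k := by
      simp only [Msum, ← Finset.sum_add_distrib]
      exact Finset.sum_congr rfl fun j _ => by ring
    rw [h]
    push_cast
    linear_combination 2*ih + 2*Msum0 k

lemma Msum2 (k : ℕ) : 4 * Msum 2 k = (k:ℂ)*((k:ℂ)+1) * 2^k := by
  induction k with
  | zero => simp [Msum]
  | succ k ih =>
    rw [Msum_step]
    have h : ∑ j ∈ Finset.range (k+1), (k.choose j : ℂ) * ((j:ℂ)+1)^2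
        = Msum 2 k + 2 * Msum 1 k + Msum 0 k := by
      simp only [Msum, Finset.mul_sum, ← Finset.sum_add_distrib]
      exact Finset.sum_congr rfl fun j _ => by ring
    rw [h]
    push_cast
    linear_combination 2*ih + 4*Msum1 k + 4*Msum0 k

lemma Msum3 (k : ℕ) : 8 * Msum 3 k = (k:ℂ)^2*((k:ℂ)+3) * 2^k := by
  induction k with
  | zero => simp [Msum]
  | succ k ih =>
    rw [Msum_step]
    have h : ∑ j ∈ Finset.range (k+1), (k.choose j : ℂ) * ((j:ℂ)+1)^3
        = Msum 3 k + 3 * Msum 2 k + 3 * Msum 1 k + Msum 0 k := by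
      simp only [Msum, Finset.mul_sum, ← Finset.sum_add_distrib]
      exact Finset.sum_congr rfl fun j _ => by ring
    rw [h]
    push_cast
    linear_combination 2*ih + 6*Msum2 k + 12*Msum1 k + 8*Msum0 k

lemma Msum4 (k : ℕ) : 16 * Msum 4 k = (k:ℂ)*((k:ℂ)+1)*((k:ℂ)^2+5*(k:ℂ)-2) * 2^k := by
  induction k with
  | zero => simp [Msum]
  | succ k ih =>
    rw [Msum_step]
    have h : ∑ j ∈ Finset.range (k+1), (k.choose j : ℂ) * ((j:ℂ)+1)^4
        = Msum 4 k + 4 * Msum 3 k + 6 * Msum 2 k + 4 * Msum 1 k + Msum 0 k := by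
      simp only [Msum, Finset.mul_sum, ← Finset.sum_add_distrib]
      exact Finset.sum_congr rfl fun j _ => by ring
    rw [h]
    push_cast
    linear_combination 2*ih + 8*Msum3 k + 24*Msum2 k + 32*Msum1 k + 16*Msum0 k

lemma key_sum (a : ℂ) (k : ℕ) :
    16 * ∑ j ∈ Finset.range (k+1), ((k.choose j : ℂ) *
      ((a + j - 2) * (a + j - 1) * (a + ((k-j : ℕ):ℂ) - 2) * (a + ((k-j : ℕ):ℂ) - 1)))
    = 2^k * ((k:ℂ)^4 - 14*(k:ℂ)^3 + 8*a*(k:ℂ)^3 + 67*(k:ℂ)^2 - 80*a*(k:ℂ)^2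
        + 24*a^2*(k:ℂ)^2 - 118*(k:ℂ) + 232*a*(k:ℂ) + 32*a^3*(k:ℂ) - 152*a^2*(k:ℂ)
        + 208*a^2 - 96*a^3 + 16*a^4 - 192*a + 64) := by
  have hsum : ∑ j ∈ Finset.range (k+1), ((k.choose j : ℂ) *
      ((a + j - 2) * (a + j - 1) * (a + ((k-j : ℕ):ℂ) - 2) * (a + ((k-j : ℕ):ℂ) - 1)))
      = (4 - 6*(k:ℂ) + 2*(k:ℂ)^2 - 12*a + 13*a*(k:ℂ) - 3*a*(k:ℂ)^2 + 13*a^2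
          - 9*a^2*(k:ℂ) + a^2*(k:ℂ)^2 - 6*a^3 + 2*a^3*(k:ℂ) + a^4) * Msum 0 k
        + (5*(k:ℂ) - 3*(k:ℂ)^2 - 6*a*(k:ℂ) + 2*a*(k:ℂ)^2 + 2*a^2*(k:ℂ)) * Msum 1 k
        + (-5 + 3*(k:ℂ) + (k:ℂ)^2 + 6*a - 2*a*(k:ℂ) - 2*a^2) * Msum 2 k
        + (-2*(k:ℂ)) * Msum 3 k
        + 1 * Msum 4 k := by
    simp only [Msum, Finset.mul_sum, ← Finset.sum_add_distrib]
    refine Finset.sum_congr rfl fun j hj => ?_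
    rw [Nat.cast_sub (Finset.mem_range_succ_iff.mp hj)]
    ring
  rw [hsum]
  linear_combination
    (16*(4 - 6*(k:ℂ) + 2*(k:ℂ)^2 - 12*a + 13*a*(k:ℂ) - 3*a*(k:ℂ)^2 + 13*a^2
          - 9*a^2*(k:ℂ) + a^2*(k:ℂ)^2 - 6*a^3 + 2*a^3*(k:ℂ) + a^4)) * Msum0 k
    + (8*(5*(k:ℂ) - 3*(k:ℂ)^2 - 6*a*(k:ℂ) + 2*a*(k:ℂ)^2 + 2*a^2*(k:ℂ))) * Msum1 k
    + (4*(-5 + 3*(k:ℂ) + (k:ℂ)^2 + 6*a - 2*a*(k:ℂ) - 2*a^2)) * Msum2 k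
    + (2*(-2*(k:ℂ))) * Msum3 k
    + Msum4 k

lemma poch_succ (z : ℂ) (n : ℕ) : poch z (n+1) = poch z n * (z + n) := by
  rw [poch, poch, ascPochhammer_succ_right]; simp

lemma poch_ratio (a : ℂ) (j : ℕ) :
    poch a j * ((a-2)*(a-1)) = poch (a-2) j * ((a + j - 2) * (a + j - 1)) := by
  induction j with
  | zero => simp [poch]
  | succ j ih =>
    rw [poch_succ, poch_succ]
    push_cast
    linear_combination (a + j) * ih

lemma poch_ne_zero_s13 (a : ℂ) (ha : ∀ m : ℕ, a - 2 + (m : ℂ) ≠ 0) (n : ℕ) :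
    poch (a-2) n ≠ 0 := by
  induction n with
  | zero => simp [poch]
  | succ n ih => rw [poch_succ]; exact mul_ne_zero ih (ha n)

lemma Tclosed (a : ℂ) (ha : ∀ m : ℕ, a - 2 + (m : ℂ) ≠ 0)
    (T : ℕ → ℂ)
    (hT : ∀ k : ℕ, T k = ∑ j ∈ Finset.range (k + 1),
      (poch a j / (poch (a - 2) j * (j.factorial : ℂ))) *
        (poch a (k - j) / (poch (a - 2) (k - j) * ((k - j).factorial : ℂ)))) (k : ℕ) :
    16 * ((a-2)*(a-1))^2 * (k.factorial : ℂ) * T k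
      = 2^k * ((k:ℂ)^4 - 14*(k:ℂ)^3 + 8*a*(k:ℂ)^3 + 67*(k:ℂ)^2 - 80*a*(k:ℂ)^2
        + 24*a^2*(k:ℂ)^2 - 118*(k:ℂ) + 232*a*(k:ℂ) + 32*a^3*(k:ℂ) - 152*a^2*(k:ℂ)
        + 208*a^2 - 96*a^3 + 16*a^4 - 192*a + 64) := by
  have h2 : a - 2 ≠ 0 := by simpa using ha 0
  have h1 : a - 1 ≠ 0 := by
    intro h; exact ha 1 (by push_cast; linear_combination h)
  have hD : (a-2)*(a-1) ≠ 0 := mul_ne_zero h2 h1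
  rw [hT k, Finset.mul_sum]
  have e : ∀ j ∈ Finset.range (k+1),
      16 * ((a-2)*(a-1))^2 * (k.factorial : ℂ) *
        ((poch a j / (poch (a - 2) j * (j.factorial : ℂ))) *
          (poch a (k - j) / (poch (a - 2) (k - j) * ((k - j).factorial : ℂ))))
      = 16 * ((k.choose j : ℂ) *
          ((a + j - 2) * (a + j - 1) * (a + ((k-j : ℕ):ℂ) - 2) * (a + ((k-j : ℕ):ℂ) - 1))) := by
    intro j hj
    have hjk : j ≤ k := Finset.mem_range_succ_iff.mp hj
    have hfj : (j.factorial : ℂ) ≠ 0 := Nat.cast_ne_zero.mpr j.factorial_ne_zero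
    have hfkj : ((k-j).factorial : ℂ) ≠ 0 := Nat.cast_ne_zero.mpr (k-j).factorial_ne_zero
    have hpj := poch_ne_zero_s13 a ha j
    have hpkj := poch_ne_zero_s13 a ha (k-j)
    have hch : ((k.choose j : ℕ):ℂ) * (j.factorial : ℂ) * ((k-j).factorial : ℂ)
        = (k.factorial : ℂ) := by
      exact_mod_cast congrArg (Nat.cast : ℕ → ℂ) (Nat.choose_mul_factorial_mul_factorial hjk)
    have d1 : poch a j / (poch (a-2) j * (j.factorial : ℂ))
        = (a + j - 2) * (a + j - 1) / (((a-2)*(a-1)) * (j.factorial : ℂ)) := by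
      rw [div_eq_div_iff (mul_ne_zero hpj hfj) (mul_ne_zero hD hfj)]
      linear_combination (j.factorial : ℂ) * poch_ratio a j
    have d2 : poch a (k-j) / (poch (a-2) (k-j) * ((k-j).factorial : ℂ))
        = (a + ((k-j:ℕ):ℂ) - 2) * (a + ((k-j:ℕ):ℂ) - 1)
            / (((a-2)*(a-1)) * (((k-j).factorial : ℕ):ℂ)) := by
      rw [div_eq_div_iff (mul_ne_zero hpkj hfkj) (mul_ne_zero hD hfkj)]
      linear_combination (((k-j).factorial : ℕ):ℂ) * poch_ratio a (k-j)
    have hQ : ((a-2)*(a-1)) * (j.factorial : ℂ) * (((a-2)*(a-1)) * (((k-j).factorial : ℕ):ℂ)) ≠ 0 :=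
      mul_ne_zero (mul_ne_zero hD hfj) (mul_ne_zero hD hfkj)
    rw [d1, d2, div_mul_div_comm, ← mul_div_assoc, div_eq_iff hQ]
    linear_combination (-(16 * ((a+j-2)*(a+j-1)*((a+((k-j:ℕ):ℂ)-2)*(a+((k-j:ℕ):ℂ)-1)))
      * ((a-2)*(a-1))^2)) * hch
  rw [Finset.sum_congr rfl e, ← Finset.mul_sum]
  exact key_sum a k

theorem stmt_13 (a : ℂ) (ha : ∀ m : ℕ, a - 2 + (m : ℂ) ≠ 0)
    (T : ℕ → ℂ)
    (hT : ∀ k : ℕ, T k = ∑ j ∈ Finset.range (k + 1),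
      (poch a j / (poch (a - 2) j * (j.factorial : ℂ))) *
        (poch a (k - j) / (poch (a - 2) (k - j) * ((k - j).factorial : ℂ)))) :
    ∀ k : ℕ,
      -(((k : ℂ) + 1) *
          ((k : ℂ) ^ 4 - 14 * (k : ℂ) ^ 3 + 8 * a * (k : ℂ) ^ 3 + 67 * (k : ℂ) ^ 2
            - 80 * a * (k : ℂ) ^ 2 + 24 * a ^ 2 * (k : ℂ) ^ 2 - 118 * (k : ℂ)
            + 232 * a * (k : ℂ) + 32 * a ^ 3 * (k : ℂ) - 152 * a ^ 2 * (k : ℂ)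
            + 208 * a ^ 2 - 96 * a ^ 3 + 16 * a ^ 4 - 192 * a + 64)) * T (k + 1)
      + 2 *
          (-22 * (k : ℂ) + 96 * a * (k : ℂ) - 56 * a * (k : ℂ) ^ 2
            - 104 * a ^ 2 * (k : ℂ) + 80 * a ^ 2 + 31 * (k : ℂ) ^ 2 - 32 * a
            - 10 * (k : ℂ) ^ 3 - 64 * a ^ 3 + 16 * a ^ 4 + 32 * a ^ 3 * (k : ℂ)
            + 24 * a ^ 2 * (k : ℂ) ^ 2 + (k : ℂ) ^ 4 + 8 * a * (k : ℂ) ^ 3) * T k = 0 := by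
  intro k
  have h2 : a - 2 ≠ 0 := by simpa using ha 0
  have h1 : a - 1 ≠ 0 := by
    intro h; exact ha 1 (by push_cast; linear_combination h)
  have hD : (a-2)*(a-1) ≠ 0 := mul_ne_zero h2 h1
  have hc1 := Tclosed a ha T hT (k+1)
  have hc0 := Tclosed a ha T hT k
  have hfk : ((k+1).factorial : ℂ) = ((k:ℂ)+1) * (k.factorial : ℂ) := by
    rw [Nat.factorial_succ]; push_cast; ring
  push_cast at hc1
  rw [hfk] at hc1
  have hne : (16:ℂ) * ((a-2)*(a-1))^2 * (((k:ℂ)+1) * (k.factorial : ℂ)) ≠ 0 :=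
    mul_ne_zero (mul_ne_zero (by norm_num) (pow_ne_zero 2 hD))
      (mul_ne_zero (Nat.cast_add_one_ne_zero k)
        (Nat.cast_ne_zero.mpr k.factorial_ne_zero))
  have hmul :
      (-(((k : ℂ) + 1) *
          ((k : ℂ) ^ 4 - 14 * (k : ℂ) ^ 3 + 8 * a * (k : ℂ) ^ 3 + 67 * (k : ℂ) ^ 2
            - 80 * a * (k : ℂ) ^ 2 + 24 * a ^ 2 * (k : ℂ) ^ 2 - 118 * (k : ℂ)
            + 232 * a * (k : ℂ) + 32 * a ^ 3 * (k : ℂ) - 152 * a ^ 2 * (k : ℂ)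
            + 208 * a ^ 2 - 96 * a ^ 3 + 16 * a ^ 4 - 192 * a + 64)) * T (k + 1)
      + 2 *
          (-22 * (k : ℂ) + 96 * a * (k : ℂ) - 56 * a * (k : ℂ) ^ 2
            - 104 * a ^ 2 * (k : ℂ) + 80 * a ^ 2 + 31 * (k : ℂ) ^ 2 - 32 * a
            - 10 * (k : ℂ) ^ 3 - 64 * a ^ 3 + 16 * a ^ 4 + 32 * a ^ 3 * (k : ℂ)
            + 24 * a ^ 2 * (k : ℂ) ^ 2 + (k : ℂ) ^ 4 + 8 * a * (k : ℂ) ^ 3) * T k)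
      * ((16:ℂ) * ((a-2)*(a-1))^2 * (((k:ℂ)+1) * (k.factorial : ℂ))) = 0 := by
    linear_combination
      (-(((k : ℂ) + 1) *
          ((k : ℂ) ^ 4 - 14 * (k : ℂ) ^ 3 + 8 * a * (k : ℂ) ^ 3 + 67 * (k : ℂ) ^ 2
            - 80 * a * (k : ℂ) ^ 2 + 24 * a ^ 2 * (k : ℂ) ^ 2 - 118 * (k : ℂ)
            + 232 * a * (k : ℂ) + 32 * a ^ 3 * (k : ℂ) - 152 * a ^ 2 * (k : ℂ)
            + 208 * a ^ 2 - 96 * a ^ 3 + 16 * a ^ 4 - 192 * a + 64))) * hc1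
      + (2 *
          (-22 * (k : ℂ) + 96 * a * (k : ℂ) - 56 * a * (k : ℂ) ^ 2
            - 104 * a ^ 2 * (k : ℂ) + 80 * a ^ 2 + 31 * (k : ℂ) ^ 2 - 32 * a
            - 10 * (k : ℂ) ^ 3 - 64 * a ^ 3 + 16 * a ^ 4 + 32 * a ^ 3 * (k : ℂ)
            + 24 * a ^ 2 * (k : ℂ) ^ 2 + (k : ℂ) ^ 4 + 8 * a * (k : ℂ) ^ 3)
          * ((k:ℂ)+1)) * hc0
  rcases mul_eq_zero.mp hmul with h | h
  · exact h
  · exact absurd h hne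
end
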